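/- arXiv:1611.03253 — 5 statements merged into one kernel-verified Lean document; each statement's English description precedes it below -/
import Mathlib

section
/- Let f : 2^N → ℝ be a submodular function with multilinear extension F and Lovász extension f̂ defined by f̂(x) = ∫_0^1 f(T_λ(x)) dλ, where T_λ(x) = {u ∈ N : x_u ≥ λ}. Then F(x) ≥ f̂(x) for every x ∈ [0,1]^N. -/
def Submodular {α : Type*} [DecidableEq α] (f : Finset α → ℝ) : Prop :=
  ∀ A B : Finset α, f (A ∪ B) + f (A ∩ B) ≤ f A + f B

noncomputable def multilinear {N : Type*} [Fintype N] [DecidableEq N]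
    (f : Finset N → ℝ) (x : N → ℝ) : ℝ :=
  ∑ S : Finset N, f S * ((∏ u ∈ S, x u) * ∏ u ∈ Sᶜ, (1 - x u))

open MeasureTheory intervalIntegral Finset in
/-- Step function representation -/
lemma step_rep {N : Type*} [Fintype N] [DecidableEq N]
    (f : Finset N → ℝ) (x : N → ℝ) (s : Finset N) (lam : ℝ) :
    f (s.filter (fun u => lam ≤ x u)) =
      ∑ S ∈ s.powerset, Set.indicator {l : ℝ | s.filter (fun u => l ≤ x u) = S}
        (fun _ => f S) lam := by
  classical
  have h : ∀ S ∈ s.powerset,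
      Set.indicator {l : ℝ | s.filter (fun u => l ≤ x u) = S} (fun _ => f S) lam
      = if s.filter (fun u => lam ≤ x u) = S then f S else 0 := by
    intro S _
    by_cases hS : s.filter (fun u => lam ≤ x u) = S <;> simp [Set.indicator, hS]
  rw [Finset.sum_congr rfl h, Finset.sum_ite_eq _ (s.filter (fun u => lam ≤ x u))]
  simp [Finset.filter_subset]

open MeasureTheory Finset in
lemma meas_fiber {N : Type*} [Fintype N] [DecidableEq N]
    (x : N → ℝ) (s S : Finset N) :
    MeasurableSet {l : ℝ | s.filter (fun u => l ≤ x u) = S} := by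
  classical
  have : {l : ℝ | s.filter (fun u => l ≤ x u) = S}
      = ⋂ u : N, {l : ℝ | ((u ∈ s ∧ l ≤ x u) ↔ u ∈ S)} := by
    ext l
    simp only [Set.mem_setOf_eq, Set.mem_iInter, Finset.ext_iff, Finset.mem_filter]
  rw [this]
  refine MeasurableSet.iInter fun u => ?_
  by_cases hu : u ∈ s <;> by_cases hS : u ∈ S
  · have : {l : ℝ | ((u ∈ s ∧ l ≤ x u) ↔ u ∈ S)} = Set.Iic (x u) := by
      ext l; simp [hu, hS]
    rw [this]; exact measurableSet_Iic
  · have : {l : ℝ | ((u ∈ s ∧ l ≤ x u) ↔ u ∈ S)} = Set.Ioi (x u) := by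
      ext l; simp [hu, hS, not_le]
    rw [this]; exact measurableSet_Ioi
  · have : {l : ℝ | ((u ∈ s ∧ l ≤ x u) ↔ u ∈ S)} = ∅ := by
      ext l; simp [hu, hS]
    rw [this]; exact MeasurableSet.empty
  · have : {l : ℝ | ((u ∈ s ∧ l ≤ x u) ↔ u ∈ S)} = Set.univ := by
      ext l; simp [hu, hS]
    rw [this]; exact MeasurableSet.univ

open MeasureTheory Finset in
lemma my_intervalIntegrable_sum {ι : Type*} (s : Finset ι) (F : ι → ℝ → ℝ) (a b : ℝ)
    (h : ∀ i ∈ s, IntervalIntegrable (F i) volume a b) :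
    IntervalIntegrable (fun x => ∑ i ∈ s, F i x) volume a b := by
  classical
  induction s using Finset.induction_on with
  | empty => simp
  | @insert j s hj ihs =>
      simp only [Finset.sum_insert hj]
      exact (h j (Finset.mem_insert_self j s)).add
        (ihs fun i hi => h i (Finset.mem_insert_of_mem hi))

open MeasureTheory Finset in
lemma step_integrable {N : Type*} [Fintype N] [DecidableEq N]
    (f : Finset N → ℝ) (x : N → ℝ) (s : Finset N) (a b : ℝ) :
    IntervalIntegrable (fun lam => f (s.filter (fun u => lam ≤ x u))) volume a b := by
  classical
  have : (fun lam => f (s.filter (fun u => lam ≤ x u)))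
      = fun lam => ∑ S ∈ s.powerset, Set.indicator
          {l : ℝ | s.filter (fun u => l ≤ x u) = S} (fun _ => f S) lam := by
    funext lam; exact step_rep f x s lam
  rw [this]
  refine my_intervalIntegrable_sum _ _ _ _ fun S _ => ?_
  rw [intervalIntegrable_iff]
  exact (integrableOn_const measure_Ioc_lt_top.ne).indicator (meas_fiber x s S)

open MeasureTheory intervalIntegral Finset in
lemma key_ind {N : Type*} [Fintype N] [DecidableEq N]
    (x : N → ℝ) (hx : ∀ v, x v ∈ Set.Icc (0:ℝ) 1) :
    ∀ s : Finset N, ∀ f : Finset N → ℝ, Submodular f →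
      (∫ lam in (0:ℝ)..1, f (s.filter (fun u => lam ≤ x u))) ≤
        ∑ S ∈ s.powerset, f S * ((∏ u ∈ S, x u) * ∏ u ∈ s \ S, (1 - x u)) := by
  classical
  intro s
  induction s using Finset.induction_on with
  | empty =>
      intro f _
      simp
  | @insert v s hv ih =>
      intro f hsub
      have hxv := hx v
      obtain ⟨hv0, hv1⟩ := hxv
      set t := x v with ht
      -- the two restricted functions
      set g : Finset N → ℝ := fun S => f (insert v S) with hg
      have hgsub : Submodular g := by
        intro A B
        have h1 : insert v A ∪ insert v B = insert v (A ∪ B) :=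
          (Finset.insert_union_distrib v A B).symm
        have h2 : insert v A ∩ insert v B = insert v (A ∩ B) := by
          ext u
          simp only [Finset.mem_inter, Finset.mem_insert]
          tauto
        have h3 := hsub (insert v A) (insert v B)
        rw [h1, h2] at h3
        exact h3
      -- RHS decomposition
      have hRHS : ∑ S ∈ (insert v s).powerset,
            f S * ((∏ u ∈ S, x u) * ∏ u ∈ (insert v s) \ S, (1 - x u)) =
          (1 - t) * (∑ S ∈ s.powerset, f S * ((∏ u ∈ S, x u) * ∏ u ∈ s \ S, (1 - x u)))
          + t * (∑ S ∈ s.powerset, g S * ((∏ u ∈ S, x u) * ∏ u ∈ s \ S, (1 - x u))) := by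
        rw [Finset.sum_powerset_insert hv, Finset.mul_sum, Finset.mul_sum]
        congr 1
        · refine Finset.sum_congr rfl fun S hS => ?_
          have hSs : S ⊆ s := Finset.mem_powerset.1 hS
          have hvS : v ∉ S := fun h => hv (hSs h)
          have h1 : (insert v s) \ S = insert v (s \ S) := by
            rw [Finset.insert_sdiff_of_notMem _ hvS]
          have h2 : v ∉ s \ S := fun h => hv (Finset.mem_sdiff.1 h).1
          rw [h1, Finset.prod_insert h2]
          ring
        · refine Finset.sum_congr rfl fun S hS => ?_
          have hSs : S ⊆ s := Finset.mem_powerset.1 hS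
          have hvS : v ∉ S := fun h => hv (hSs h)
          have h1 : (insert v s) \ insert v S = s \ S := by
            ext u
            simp only [Finset.mem_sdiff, Finset.mem_insert]
            constructor
            · rintro ⟨h3 | h3, h4⟩
              · exact absurd (Or.inl h3) h4
              · exact ⟨h3, fun h5 => h4 (Or.inr h5)⟩
            · rintro ⟨h3, h4⟩
              exact ⟨Or.inr h3, fun h5 => h5.elim (fun h6 => hv (h6 ▸ h3)) h4⟩
          rw [h1, Finset.prod_insert hvS]
          simp only [hg]
          ring
      -- LHS decomposition : split the integral at t
      have hInt0 : ∀ a b : ℝ, IntervalIntegrable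
            (fun lam => f (s.filter (fun u => lam ≤ x u))) volume a b :=
        step_integrable f x s
      have hInt1 : ∀ a b : ℝ, IntervalIntegrable
            (fun lam => g (s.filter (fun u => lam ≤ x u))) volume a b :=
        step_integrable g x s
      have hsplit : (∫ lam in (0:ℝ)..1, f ((insert v s).filter (fun u => lam ≤ x u)))
          = (∫ lam in (0:ℝ)..t, g (s.filter (fun u => lam ≤ x u)))
            + ∫ lam in t..1, f (s.filter (fun u => lam ≤ x u)) := by
        have e1 : (∫ lam in (0:ℝ)..t, f ((insert v s).filter (fun u => lam ≤ x u)))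
            = ∫ lam in (0:ℝ)..t, g (s.filter (fun u => lam ≤ x u)) := by
          refine integral_congr fun lam hlam => ?_
          rw [Set.uIcc_of_le hv0] at hlam
          have hl : lam ≤ x v := hlam.2
          simp only [hg]
          congr 1
          rw [Finset.filter_insert, if_pos hl]
        have e2 : (∫ lam in t..(1:ℝ), f ((insert v s).filter (fun u => lam ≤ x u)))
            = ∫ lam in t..1, f (s.filter (fun u => lam ≤ x u)) := by
          refine integral_congr_ae (MeasureTheory.ae_of_all _ fun lam hlam => ?_)
          rw [Set.uIoc_of_le hv1] at hlam
          have hl : ¬ (lam ≤ x v) := not_le.2 hlam.1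
          congr 1
          rw [Finset.filter_insert, if_neg hl]
        rw [← integral_add_adjacent_intervals (step_integrable f x (insert v s) 0 t)
          (step_integrable f x (insert v s) t 1), e1, e2]
      rw [hRHS, hsplit]
      -- apply induction hypothesis
      have ih0 := ih f hsub
      have ih1 := ih g hgsub
      -- abbreviations
      set F0 : ℝ → ℝ := fun lam => f (s.filter (fun u => lam ≤ x u)) with hF0
      set F1 : ℝ → ℝ := fun lam => g (s.filter (fun u => lam ≤ x u)) with hF1
      have hmain : (∫ lam in (0:ℝ)..t, F1 lam) + (∫ lam in t..1, F0 lam)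
          ≤ (1 - t) * (∫ lam in (0:ℝ)..1, F0 lam)
            + t * (∫ lam in (0:ℝ)..1, F1 lam) := by
        have s0 : (∫ lam in (0:ℝ)..1, F0 lam)
            = (∫ lam in (0:ℝ)..t, F0 lam) + ∫ lam in t..1, F0 lam :=
          (integral_add_adjacent_intervals (hInt0 0 t) (hInt0 t 1)).symm
        have s1 : (∫ lam in (0:ℝ)..1, F1 lam)
            = (∫ lam in (0:ℝ)..t, F1 lam) + ∫ lam in t..1, F1 lam :=
          (integral_add_adjacent_intervals (hInt1 0 t) (hInt1 t 1)).symm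
        rw [s0, s1]
        -- reduce to the monotone marginal inequality
        -- h lam = F1 lam - F0 lam is monotone
        have hmono : Monotone (fun lam => F1 lam - F0 lam) := by
          intro a b hab
          have hsubset : s.filter (fun u => b ≤ x u) ⊆ s.filter (fun u => a ≤ x u) := by
            intro u hu
            rw [Finset.mem_filter] at hu ⊢
            exact ⟨hu.1, le_trans hab hu.2⟩
          set A := s.filter (fun u => a ≤ x u)
          set B := s.filter (fun u => b ≤ x u)
          have hvA : v ∉ A := fun h => hv (Finset.mem_filter.1 h).1
          have key := hsub (insert v B) A
          have hU : insert v B ∪ A = insert v A := by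
            rw [Finset.insert_union, Finset.union_eq_right.2 hsubset]
          have hI : insert v B ∩ A = B := by
            ext u
            simp only [Finset.mem_inter, Finset.mem_insert]
            constructor
            · rintro ⟨h1 | h1, h2⟩
              · exact absurd (h1 ▸ h2) hvA
              · exact h1
            · intro h1; exact ⟨Or.inr h1, hsubset h1⟩
          rw [hU, hI] at key
          simp only [hF0, hF1, hg]
          linarith
        -- integral bounds via monotonicity
        have b1 : (∫ lam in (0:ℝ)..t, F1 lam - F0 lam) ≤ (t - 0) • (F1 t - F0 t) := by
          rw [← intervalIntegral.integral_const (F1 t - F0 t)]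
          exact integral_mono_on (a := (0:ℝ)) (b := t) hv0
            ((hInt1 0 t).sub (hInt0 0 t))
            (_root_.intervalIntegrable_const (c := F1 t - F0 t))
            (fun lam hlam => hmono hlam.2)
        have b2 : ((1:ℝ) - t) • (F1 t - F0 t) ≤ ∫ lam in t..1, F1 lam - F0 lam := by
          rw [← intervalIntegral.integral_const (F1 t - F0 t)]
          exact integral_mono_on (a := t) (b := 1) hv1
            (_root_.intervalIntegrable_const (c := F1 t - F0 t))
            ((hInt1 t 1).sub (hInt0 t 1))
            (fun lam hlam => hmono hlam.1)
        have b1' : (∫ lam in (0:ℝ)..t, F1 lam) - (∫ lam in (0:ℝ)..t, F0 lam)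
            ≤ t * (F1 t - F0 t) := by
          rw [← integral_sub (hInt1 0 t) (hInt0 0 t)]
          simpa [smul_eq_mul] using b1
        have b2' : (1 - t) * (F1 t - F0 t)
            ≤ (∫ lam in t..1, F1 lam) - (∫ lam in t..1, F0 lam) := by
          rw [← integral_sub (hInt1 t 1) (hInt0 t 1)]
          simpa [smul_eq_mul] using b2
        nlinarith [mul_le_mul_of_nonneg_left b1' (sub_nonneg.2 hv1),
          mul_le_mul_of_nonneg_left b2' hv0]
      calc (∫ lam in (0:ℝ)..t, F1 lam) + (∫ lam in t..1, F0 lam)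
          ≤ (1 - t) * (∫ lam in (0:ℝ)..1, F0 lam)
            + t * (∫ lam in (0:ℝ)..1, F1 lam) := hmain
        _ ≤ (1 - t) * (∑ S ∈ s.powerset, f S * ((∏ u ∈ S, x u) * ∏ u ∈ s \ S, (1 - x u)))
            + t * (∑ S ∈ s.powerset, g S * ((∏ u ∈ S, x u) * ∏ u ∈ s \ S, (1 - x u))) := by
            apply add_le_add
            · exact mul_le_mul_of_nonneg_left ih0 (by linarith)
            · exact mul_le_mul_of_nonneg_left ih1 hv0

theorem stmt_7 {N : Type*} [Fintype N] [DecidableEq N]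
    (f : Finset N → ℝ) (hsub : Submodular f)
    (x : N → ℝ) (hx : ∀ v, x v ∈ Set.Icc (0:ℝ) 1) :
    multilinear f x ≥
      ∫ lam in (0:ℝ)..1, f (Finset.filter (fun u => lam ≤ x u) Finset.univ) := by
  classical
  have h := key_ind x hx Finset.univ f hsub
  unfold multilinear
  rw [ge_iff_le]
  calc (∫ lam in (0:ℝ)..1, f (Finset.filter (fun u => lam ≤ x u) Finset.univ))
      ≤ ∑ S ∈ Finset.univ.powerset, f S * ((∏ u ∈ S, x u) * ∏ u ∈ Finset.univ \ S, (1 - x u)) := h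
    _ = ∑ S : Finset N, f S * ((∏ u ∈ S, x u) * ∏ u ∈ Sᶜ, (1 - x u)) := by
        rw [Finset.powerset_univ]
        refine Finset.sum_congr rfl fun S _ => ?_
        rw [Finset.compl_eq_univ_sdiff]
end

section
/- Let f : 2^N → ℝ≥0 be non-negative and let A, Z ⊆ N. Fix t ∈ [0,1] and t_s ∈ [0,1], and suppose x ∈ [0,1]^N satisfies x_u ≤ 1 − e^{-t} for all u ∉ Z and x_u ≤ 1 − e^{-max(0, t − t_s)} for all u ∈ Z. Define the Lovász-type integral I = ∫_0^1 f(T_λ(x ∨ 1_A)) dλ where T_λ(y) = {u : y_u ≥ λ}. If f is submodular, then I ≥ (e^{-max(0,t−t_s)} − e^{-t}) · max{0, f(A) − f(A ∪ Z)} + e^{-t} · f(A). -/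
open MeasureTheory Set Finset

theorem Submodular.map_inter_sub_le {α : Type*} [DecidableEq α] {f : Finset α → ℝ}
    (hsub : Submodular f) (hnn : ∀ S, 0 ≤ f S) (S T : Finset α) :
    f (S ∩ T) - f T ≤ f S := by
  linarith [hsub S T, hnn (S ∪ T)]

section StepBound

variable {g : ℝ → ℝ}

theorem mul_sub_le_intervalIntegral {a b c : ℝ} (hab : a ≤ b)
    (hg : IntervalIntegrable g volume a b) (h : ∀ x ∈ Ioo a b, c ≤ g x) :
    c * (b - a) ≤ ∫ x in a..b, g x := by
  calc c * (b - a) = ∫ _ in a..b, c := by simp [mul_comm]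
    _ ≤ ∫ x in a..b, g x :=
      intervalIntegral.integral_mono_on_of_le_Ioo hab intervalIntegrable_const hg h

theorem step_le_intervalIntegral {p a b q c₀ c₁ c₂ : ℝ} (hpa : p ≤ a) (hab : a ≤ b) (hbq : b ≤ q)
    (hg : ∀ c d, IntervalIntegrable g volume c d) (h₀ : ∀ x ∈ Ioo p a, c₀ ≤ g x)
    (h₁ : ∀ x ∈ Ioo a b, c₁ ≤ g x) (h₂ : ∀ x ∈ Ioo b q, c₂ ≤ g x) :
    c₀ * (a - p) + c₁ * (b - a) + c₂ * (q - b) ≤ ∫ x in p..q, g x := by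
  rw [← intervalIntegral.integral_add_adjacent_intervals (hg p b) (hg b q),
    ← intervalIntegral.integral_add_adjacent_intervals (hg p a) (hg a b)]
  gcongr
  · exact mul_sub_le_intervalIntegral hpa (hg _ _) h₀
  · exact mul_sub_le_intervalIntegral hab (hg _ _) h₁
  · exact mul_sub_le_intervalIntegral hbq (hg _ _) h₂

end StepBound

section thresholdSet

variable {N : Type*} [Fintype N]

/-- The paper's `T_λ(y)`. -/
noncomputable def thresholdSet (y : N → ℝ) (lam : ℝ) : Finset N :=
  univ.filter fun u => lam ≤ y u

@[simp]
theorem mem_thresholdSet {y : N → ℝ} {lam : ℝ} {u : N} :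
    u ∈ thresholdSet y lam ↔ lam ≤ y u := by
  simp [thresholdSet]

theorem measurable_comp_thresholdSet {β : Type*} [MeasurableSpace β] (y : N → ℝ)
    (g : Finset N → β) : Measurable fun lam => g (thresholdSet y lam) := by
  classical
  have hpred : Measurable fun lam (u : N) => lam ≤ y u :=
    measurable_pi_lambda _ fun u => measurableSet_setOfPred.mp measurableSet_Iic
  convert (measurable_of_countable fun p : N → Prop => g (univ.filter p)).comp hpred using 2
  simp [thresholdSet]

theorem intervalIntegrable_comp_thresholdSet (y : N → ℝ) (g : Finset N → ℝ) (a b : ℝ) :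
    IntervalIntegrable (fun lam => g (thresholdSet y lam)) volume a b := by
  refine IntegrableOn.intervalIntegrable (Measure.integrableOn_of_bounded (M := ∑ S, ‖g S‖)
    isCompact_uIcc.measure_lt_top.ne (measurable_comp_thresholdSet y g).aestronglyMeasurable
    (ae_of_all _ fun lam => ?_))
  exact single_le_sum (f := fun S => ‖g S‖) (fun S _ => norm_nonneg _) (mem_univ _)

variable [DecidableEq N] {x : N → ℝ} {A : Finset N} {lam : ℝ}

theorem thresholdSet_max_indicator (hlam0 : 0 < lam) (hlam1 : lam ≤ 1) :
    thresholdSet (fun u => max (x u) (if u ∈ A then 1 else 0)) lam = A ∪ thresholdSet x lam := by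
  ext u
  by_cases hu : u ∈ A <;> simp [hu, hlam1, hlam0.not_ge]

theorem thresholdSet_max_indicator_inter_union {Z : Finset N} (hlam0 : 0 < lam)
    (hlam1 : lam ≤ 1) (hZ : ∀ u ∈ Z, x u < lam) :
    thresholdSet (fun u => max (x u) (if u ∈ A then 1 else 0)) lam ∩ (A ∪ Z) = A := by
  have hdisj : Disjoint (thresholdSet x lam) Z :=
    disjoint_right.mpr fun u hu => by simpa using hZ u hu
  rw [thresholdSet_max_indicator hlam0 hlam1, ← Finset.union_inter_distrib_left,
    disjoint_iff_inter_eq_empty.mp hdisj, Finset.union_empty]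

theorem thresholdSet_max_indicator_eq (hlam0 : 0 < lam) (hlam1 : lam ≤ 1)
    (hx : ∀ u, x u < lam) :
    thresholdSet (fun u => max (x u) (if u ∈ A then 1 else 0)) lam = A := by
  rw [thresholdSet_max_indicator hlam0 hlam1,
    Finset.eq_empty_of_forall_notMem (s := thresholdSet x lam) fun u => by simpa using hx u,
    Finset.union_empty]

end thresholdSet

theorem stmt_11_general {N : Type*} [Fintype N] [DecidableEq N]
    (f : Finset N → ℝ) (hnn : ∀ S : Finset N, 0 ≤ f S) (hsub : Submodular f)
    (A Z : Finset N) (t ts : ℝ) (ht : t ∈ Set.Icc (0:ℝ) 1) (hts : ts ∈ Set.Icc (0:ℝ) 1)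
    (x : N → ℝ)
    (h1 : ∀ u ∉ Z, x u ≤ 1 - Real.exp (-t))
    (h2 : ∀ u ∈ Z, x u ≤ 1 - Real.exp (-(max 0 (t - ts)))) :
    (∫ lam in (0:ℝ)..1,
        f (Finset.filter (fun u => lam ≤ max (x u) (if u ∈ A then 1 else 0)) Finset.univ)) ≥
      (Real.exp (-(max 0 (t - ts))) - Real.exp (-t)) * max 0 (f A - f (A ∪ Z)) +
        Real.exp (-t) * f A := by
  set a := 1 - Real.exp (-(max 0 (t - ts)))
  set b := 1 - Real.exp (-t)
  have ha0 : 0 ≤ a := by simp [a]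
  have hab : a ≤ b := by
    have : Real.exp (-t) ≤ Real.exp (-(max 0 (t - ts))) :=
      Real.exp_le_exp.mpr (neg_le_neg (max_le ht.1 (by linarith [hts.1])))
    linarith
  have hb1 : b ≤ 1 := by simp [b, (Real.exp_pos _).le]
  have hx (u) : x u ≤ b := if hu : u ∈ Z then (h2 u hu).trans hab else h1 u hu
  set y : N → ℝ := fun u => max (x u) (if u ∈ A then 1 else 0)
  have hmid : ∀ lam ∈ Ioo a b, max 0 (f A - f (A ∪ Z)) ≤ f (thresholdSet y lam) := by
    rintro lam ⟨hal, hlb⟩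
    have hcap : thresholdSet y lam ∩ (A ∪ Z) = A :=
      thresholdSet_max_indicator_inter_union (ha0.trans_lt hal) (hlb.le.trans hb1)
        fun u hu => (h2 u hu).trans_lt hal
    have hsubmod := hsub.map_inter_sub_le hnn (thresholdSet y lam) (A ∪ Z)
    rw [hcap] at hsubmod
    exact max_le (hnn _) (by linarith)
  have hhigh : ∀ lam ∈ Ioo b 1, f A ≤ f (thresholdSet y lam) := by
    rintro lam ⟨hbl, hl1⟩
    have hA : thresholdSet y lam = A := thresholdSet_max_indicator_eq
      (ha0.trans_lt (hab.trans_lt hbl)) hl1.le fun u => (hx u).trans_lt hbl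
    rw [hA]
  calc _ = 0 * (a - 0) + max 0 (f A - f (A ∪ Z)) * (b - a) + f A * (1 - b) := by ring
    _ ≤ ∫ lam in (0:ℝ)..1, f (thresholdSet y lam) :=
      step_le_intervalIntegral ha0 hab hb1 (intervalIntegrable_comp_thresholdSet y f)
        (fun _ _ => hnn _) hmid hhigh

theorem stmt_11 {N : Type*} [Fintype N] [DecidableEq N]
    (f : Finset N → ℝ) (hnn : ∀ S : Finset N, 0 ≤ f S) (hsub : Submodular f)
    (A Z : Finset N) (t ts : ℝ) (ht : t ∈ Set.Icc (0:ℝ) 1) (hts : ts ∈ Set.Icc (0:ℝ) 1)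
    (x : N → ℝ) (hx : ∀ u, x u ∈ Set.Icc (0:ℝ) 1)
    (h1 : ∀ u ∉ Z, x u ≤ 1 - Real.exp (-t))
    (h2 : ∀ u ∈ Z, x u ≤ 1 - Real.exp (-(max 0 (t - ts)))) :
    (∫ lam in (0:ℝ)..1,
        f (Finset.filter (fun u => lam ≤ max (x u) (if u ∈ A then 1 else 0)) Finset.univ)) ≥
      (Real.exp (-(max 0 (t - ts))) - Real.exp (-t)) * max 0 (f A - f (A ∪ Z)) +
        Real.exp (-t) * f A :=
  stmt_11_general f hnn hsub A Z t ts ht hts x h1 h2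
end

section
/- Let g : [0, t_s] → ℝ satisfy the differential inequality g'(t) ≥ c₁ − (1 − e^{-t})·c₂ − g(t) for all t ∈ [0, t_s] with g(0) ≥ 0, where c₁, c₂ are real constants. Then g(t) ≥ (1 − e^{-t})·c₁ − (1 − e^{-t} − t e^{-t})·c₂ for all t ∈ [0, t_s]. -/
theorem stmt_12 (ts c₁ c₂ : ℝ) (hts : 0 ≤ ts) (g g' : ℝ → ℝ)
    (hderiv : ∀ t ∈ Set.Icc 0 ts, HasDerivAt g (g' t) t)
    (hineq : ∀ t ∈ Set.Icc 0 ts, g' t ≥ c₁ - (1 - Real.exp (-t)) * c₂ - g t)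
    (h0 : 0 ≤ g 0) :
    ∀ t ∈ Set.Icc 0 ts,
      g t ≥ (1 - Real.exp (-t)) * c₁ - (1 - Real.exp (-t) - t * Real.exp (-t)) * c₂ := by
  set h : ℝ → ℝ := fun t =>
    Real.exp t * g t - (Real.exp t - 1) * c₁ + (Real.exp t - 1 - t) * c₂ with hh
  have hderivh : ∀ t ∈ Set.Icc 0 ts, HasDerivAt h
      (Real.exp t * g t + Real.exp t * g' t - Real.exp t * c₁ + (Real.exp t - 1) * c₂) t := by
    intro t ht
    have h1 : HasDerivAt (fun t => Real.exp t * g t)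
        (Real.exp t * g t + Real.exp t * g' t) t :=
      (Real.hasDerivAt_exp t).mul (hderiv t ht)
    have h2 : HasDerivAt (fun t => (Real.exp t - 1) * c₁) (Real.exp t * c₁) t :=
      (((Real.hasDerivAt_exp t).sub_const 1).mul_const c₁)
    have h3 : HasDerivAt (fun t => (Real.exp t - 1 - t) * c₂)
        ((Real.exp t - 1) * c₂) t := by
      have := (((Real.hasDerivAt_exp t).sub_const 1).sub (hasDerivAt_id t)).mul_const c₂
      simpa using this
    exact (h1.sub h2).add h3
  have hmono : MonotoneOn h (Set.Icc 0 ts) := by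
    have hcont : ContinuousOn h (Set.Icc 0 ts) := fun x hx =>
      ((hderivh x hx).continuousAt).continuousWithinAt
    refine monotoneOn_of_deriv_nonneg (convex_Icc 0 ts) hcont (fun x hx => ?_) (fun x hx => ?_)
    · rw [interior_Icc] at hx
      exact ((hderivh x ⟨le_of_lt hx.1, le_of_lt hx.2⟩).differentiableAt).differentiableWithinAt
    · rw [interior_Icc] at hx
      have hx' : x ∈ Set.Icc 0 ts := ⟨le_of_lt hx.1, le_of_lt hx.2⟩
      rw [(hderivh x hx').deriv]
      have hgx := hineq x hx'
      have hexp : (0:ℝ) < Real.exp x := Real.exp_pos x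
      have key : Real.exp x * g' x ≥ Real.exp x * (c₁ - (1 - Real.exp (-x)) * c₂ - g x) :=
        mul_le_mul_of_nonneg_left hgx hexp.le
      have hee : Real.exp x * Real.exp (-x) = 1 := by
        rw [← Real.exp_add]; simp
      have hkey' : Real.exp x * (c₁ - (1 - Real.exp (-x)) * c₂ - g x)
          = Real.exp x * c₁ - (Real.exp x - 1) * c₂ - Real.exp x * g x := by
        linear_combination c₂ * hee
      linarith [key, hkey'.symm.le.trans key]
  intro t ht
  have h0t : (0:ℝ) ∈ Set.Icc 0 ts := ⟨le_refl 0, hts⟩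
  have := hmono h0t ht ht.1
  have hh0 : h 0 = g 0 := by simp [hh]
  have hht : h t = Real.exp t * g t - (Real.exp t - 1) * c₁ + (Real.exp t - 1 - t) * c₂ := rfl
  have hpos : (0:ℝ) < Real.exp (-t) := Real.exp_pos _
  have hee : Real.exp (-t) * Real.exp t = 1 := by rw [← Real.exp_add]; simp
  have hgt : g 0 ≤ Real.exp t * g t - (Real.exp t - 1) * c₁ + (Real.exp t - 1 - t) * c₂ := by
    rw [← hh0, ← hht]; exact this
  have key2 : 0 ≤ Real.exp (-t) *
      (Real.exp t * g t - (Real.exp t - 1) * c₁ + (Real.exp t - 1 - t) * c₂) :=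
    mul_nonneg hpos.le (h0.trans hgt)
  have e1 : Real.exp (-t) *
      (Real.exp t * g t - (Real.exp t - 1) * c₁ + (Real.exp t - 1 - t) * c₂)
      = g t - (1 - Real.exp (-t)) * c₁ + (1 - Real.exp (-t) - t * Real.exp (-t)) * c₂ := by
    linear_combination (g t - c₁ + c₂) * hee
  linarith [e1 ▸ key2]
end

section
/- Let t_s ∈ [0,1], let A, B, v be real constants, and let g : [t_s, 1] → ℝ be differentiable with g(t_s) ≥ v and g'(t) ≥ e^{t_s − t}·A − (e^{t_s − t} − e^{-t})·B − g(t) for all t ∈ [t_s, 1]. Then for all t ∈ [t_s, 1], g(t) ≥ e^{-t}·[(t − t_s)·(e^{t_s}·A − (e^{t_s} − 1)·B) + v·e^{t_s}]. -/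
/-!
Multiplying by the integrating factor `exp t` turns the differential inequality into
`(exp t * g t)' ≥ exp ts * A - (exp ts - 1) * B`, a constant; integrating from `ts` and
using `g ts ≥ v` gives the bound.
-/

open Real Set

lemma mul_sub_le_sub_of_hasDerivAt_Icc {f f' : ℝ → ℝ} {a b C : ℝ}
    (hf : ∀ x ∈ Icc a b, HasDerivAt f (f' x) x) (hC : ∀ x ∈ Icc a b, C ≤ f' x)
    {x : ℝ} (hx : x ∈ Icc a b) : C * (x - a) ≤ f x - f a := by
  have ha : a ∈ Icc a b := left_mem_Icc.mpr (hx.1.trans hx.2)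
  refine (convex_Icc a b).mul_sub_le_image_sub_of_le_deriv
    (fun y hy => (hf y hy).continuousAt.continuousWithinAt)
    (fun y hy => (hf y (interior_subset hy)).differentiableAt.differentiableWithinAt)
    (fun y hy => ?_) a ha x hx hx.1
  rw [(hf y (interior_subset hy)).deriv]
  exact hC y (interior_subset hy)

lemma exp_mul_exp_sub_mul_sub (s t A B : ℝ) :
    exp t * (exp (s - t) * A - (exp (s - t) - exp (-t)) * B) = exp s * A - (exp s - 1) * B := by
  have hs : exp t * exp (s - t) = exp s := by rw [← exp_add, add_sub_cancel]
  have h1 : exp t * exp (-t) = 1 := by rw [← exp_add, add_neg_cancel, exp_zero]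
  linear_combination (A - B) * hs + B * h1

theorem stmt_13_general (ts : ℝ) (A B v : ℝ) (g g' : ℝ → ℝ)
    (hderiv : ∀ t ∈ Set.Icc ts 1, HasDerivAt g (g' t) t)
    (hv : g ts ≥ v)
    (hineq : ∀ t ∈ Set.Icc ts 1,
      g' t ≥ Real.exp (ts - t) * A - (Real.exp (ts - t) - Real.exp (-t)) * B - g t) :
    ∀ t ∈ Set.Icc ts 1,
      g t ≥ Real.exp (-t) *
        ((t - ts) * (Real.exp ts * A - (Real.exp ts - 1) * B) + v * Real.exp ts) := by
  intro t ht
  have hφ : ∀ u ∈ Icc ts 1, HasDerivAt (fun u => exp u * g u) (exp u * (g u + g' u)) u :=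
    fun u hu => by rw [mul_add]; exact (hasDerivAt_exp u).mul (hderiv u hu)
  have hφ' : ∀ u ∈ Icc ts 1, exp ts * A - (exp ts - 1) * B ≤ exp u * (g u + g' u) := by
    intro u hu
    rw [← exp_mul_exp_sub_mul_sub ts u A B]
    exact mul_le_mul_of_nonneg_left (by linarith [hineq u hu]) (exp_pos u).le
  have hint := mul_sub_le_sub_of_hasDerivAt_Icc hφ hφ' ht
  have hgv : v * exp ts ≤ exp ts * g ts := by nlinarith [exp_pos ts]
  rw [ge_iff_le, exp_neg, inv_mul_le_iff₀ (exp_pos t)]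
  linarith

theorem stmt_13 (ts : ℝ) (hts : ts ∈ Set.Icc (0:ℝ) 1) (A B v : ℝ) (g g' : ℝ → ℝ)
    (hderiv : ∀ t ∈ Set.Icc ts 1, HasDerivAt g (g' t) t)
    (hv : g ts ≥ v)
    (hineq : ∀ t ∈ Set.Icc ts 1,
      g' t ≥ Real.exp (ts - t) * A - (Real.exp (ts - t) - Real.exp (-t)) * B - g t) :
    ∀ t ∈ Set.Icc ts 1,
      g t ≥ Real.exp (-t) *
        ((t - ts) * (Real.exp ts * A - (Real.exp ts - 1) * B) + v * Real.exp ts) :=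
  stmt_13_general ts A B v g g' hderiv hv hineq
end

section
/- Let P ⊆ [0,1]^N be a convex down-closed set and let x(0), …, x(k−1) ∈ P and y(0), …, y(k) ∈ [0,1]^N satisfy y(0) = 0 and y(i+1) = y(i) + δ_i·(1 − y(i)) ∘ x(i) coordinate-wise, where δ_0, …, δ_{k−1} ≥ 0 with Σδ_i = 1 and ∘ denotes coordinate-wise product. Then y(k) ∈ P. -/
theorem stmt_18 {N : Type*} [Fintype N] (P : Set (N → ℝ))
    (hPbox : P ⊆ {x | ∀ u, x u ∈ Set.Icc (0:ℝ) 1})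
    (hconv : Convex ℝ P)
    (hdown : ∀ y ∈ P, ∀ x : N → ℝ, (∀ u, 0 ≤ x u ∧ x u ≤ y u) → x ∈ P)
    (k : ℕ) (x : ℕ → N → ℝ) (hx : ∀ i < k, x i ∈ P)
    (δ : ℕ → ℝ) (hδ : ∀ i < k, 0 ≤ δ i) (hδsum : ∑ i ∈ Finset.range k, δ i = 1)
    (y : ℕ → N → ℝ) (hybox : ∀ i ≤ k, ∀ u, y i u ∈ Set.Icc (0:ℝ) 1)
    (hy0 : y 0 = 0)
    (hrec : ∀ i < k, ∀ u, y (i + 1) u = y i u + δ i * (1 - y i u) * x i u) :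
    y k ∈ P := by
  have hz : (∑ i ∈ Finset.range k, δ i • x i) ∈ P := by
    apply hconv.sum_mem (fun i hi => hδ i (Finset.mem_range.mp hi)) hδsum
    exact fun i hi => hx i (Finset.mem_range.mp hi)
  have hform : ∀ j ≤ k, ∀ u, y j u = ∑ i ∈ Finset.range j, δ i * (1 - y i u) * x i u := by
    intro j hj
    induction j with
    | zero => intro u; simp [hy0]
    | succ n ih =>
      intro u
      rw [Finset.sum_range_succ, ← ih (Nat.le_of_succ_le hj) u,
        hrec n (Nat.lt_of_succ_le hj) u]
  apply hdown _ hz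
  intro u
  constructor
  · exact (hybox k le_rfl u).1
  · rw [hform k le_rfl u]
    simp only [Finset.sum_apply, Pi.smul_apply, smul_eq_mul]
    apply Finset.sum_le_sum
    intro i hi
    have hik := Finset.mem_range.mp hi
    have hxi := hPbox (hx i hik) u
    have hyi := hybox i hik.le u
    nlinarith [mul_nonneg (mul_nonneg (hδ i hik) hyi.1) hxi.1]
end
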